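/- Let f : Fin n → ℝ[x₁,…,xₙ] be a polynomial vector field with fᵢ(0) = 0 for all i, let p ∈ ℝ[x₁,…,xₙ], let r > 0, and let N ≥ 1 satisfy L^{N+1}_f p ∈ ⟨L¹_f p, …, L^N_f p⟩. Then p is a relaxed Lyapunov function on the open ball B(0,r) — i.e., (a) p(0) = 0, (b) p(a) > 0 for all a with 0 < ‖a‖ < r, and (c) every a with 0 < ‖a‖ < r lies in Trans_{p,f} — if and only if: p(0) = 0, and for all a ∈ ℝⁿ with 0 < ‖a‖² < r², p(a) > 0, and for all a ∈ ℝⁿ with 0 < ‖a‖² < r² there exists i with 1 ≤ i ≤ N such that (L^j_f p)(a) = 0 for all 1 ≤ j < i and (L^i_f p)(a) < 0. -/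
import Mathlib

open MvPolynomial

noncomputable def lieDeriv {n : ℕ} (f : Fin n → MvPolynomial (Fin n) ℝ)
    (p : MvPolynomial (Fin n) ℝ) : MvPolynomial (Fin n) ℝ :=
  ∑ i, pderiv i p * f i

lemma lieDeriv_add {n : ℕ} (f : Fin n → MvPolynomial (Fin n) ℝ)
    (p q : MvPolynomial (Fin n) ℝ) :
    lieDeriv f (p + q) = lieDeriv f p + lieDeriv f q := by
  simp [lieDeriv, map_add, add_mul, Finset.sum_add_distrib]

lemma lieDeriv_mul {n : ℕ} (f : Fin n → MvPolynomial (Fin n) ℝ)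
    (p q : MvPolynomial (Fin n) ℝ) :
    lieDeriv f (p * q) = lieDeriv f p * q + p * lieDeriv f q := by
  unfold lieDeriv
  rw [Finset.sum_mul, Finset.mul_sum, ← Finset.sum_add_distrib]
  refine Finset.sum_congr rfl fun i _ => ?_
  rw [pderiv_mul]; ring

lemma ideal_invariant {n : ℕ} (f : Fin n → MvPolynomial (Fin n) ℝ)
    (S : Set (MvPolynomial (Fin n) ℝ))
    (hS : ∀ s ∈ S, lieDeriv f s ∈ Ideal.span S) :
    ∀ q ∈ Ideal.span S, lieDeriv f q ∈ Ideal.span S := by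
  intro q hq
  refine (Submodule.span_induction (p := fun q _ => q ∈ Ideal.span S ∧ lieDeriv f q ∈ Ideal.span S)
    (fun s hs => ⟨Ideal.subset_span hs, hS s hs⟩) ?_ ?_ ?_ hq).2
  · constructor
    · exact Ideal.zero_mem _
    · simp [lieDeriv]
  · intro x y _ _ hx hy
    exact ⟨Ideal.add_mem _ hx.1 hy.1, by rw [lieDeriv_add]; exact Ideal.add_mem _ hx.2 hy.2⟩
  · intro c x _ hx
    refine ⟨Ideal.mul_mem_left _ _ hx.1, ?_⟩
    rw [smul_eq_mul, lieDeriv_mul]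
    exact Ideal.add_mem _ (Ideal.mul_mem_left _ _ hx.1) (Ideal.mul_mem_left _ _ hx.2)

/-- Main result: `p` is a relaxed Lyapunov function on the ball `B(0,r)` iff the
quantified conditions (expressed with squared norms and Lie derivatives of order
at most `N`) hold. -/
theorem rlf_characterization {n : ℕ} (f : Fin n → MvPolynomial (Fin n) ℝ)
    (hf0 : ∀ i, eval (0 : Fin n → ℝ) (f i) = 0)
    (p : MvPolynomial (Fin n) ℝ) (r : ℝ) (hr : 0 < r)
    (N : ℕ) (hN : 1 ≤ N)
    (h : (lieDeriv f)^[N + 1] p ∈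
      Ideal.span ((fun j => (lieDeriv f)^[j] p) '' Set.Icc 1 N)) :
    (eval (0 : Fin n → ℝ) p = 0 ∧
      (∀ a : EuclideanSpace ℝ (Fin n), 0 < ‖a‖ → ‖a‖ < r →
        0 < eval (fun i => a i) p) ∧
      (∀ a : EuclideanSpace ℝ (Fin n), 0 < ‖a‖ → ‖a‖ < r →
        ∃ k, 1 ≤ k ∧ (∀ j, 1 ≤ j → j < k → eval (fun i => a i) ((lieDeriv f)^[j] p) = 0) ∧
          eval (fun i => a i) ((lieDeriv f)^[k] p) < 0)) ↔
    (eval (0 : Fin n → ℝ) p = 0 ∧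
      (∀ a : EuclideanSpace ℝ (Fin n), 0 < ‖a‖ ^ 2 → ‖a‖ ^ 2 < r ^ 2 →
        0 < eval (fun i => a i) p) ∧
      (∀ a : EuclideanSpace ℝ (Fin n), 0 < ‖a‖ ^ 2 → ‖a‖ ^ 2 < r ^ 2 →
        ∃ i, 1 ≤ i ∧ i ≤ N ∧
          (∀ j, 1 ≤ j → j < i → eval (fun i => a i) ((lieDeriv f)^[j] p) = 0) ∧
          eval (fun i => a i) ((lieDeriv f)^[i] p) < 0)) := by
  set I := Ideal.span ((fun j => (lieDeriv f)^[j] p) '' Set.Icc 1 N) with hI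
  have hinv : ∀ q ∈ I, lieDeriv f q ∈ I := by
    apply ideal_invariant
    rintro s ⟨j, ⟨hj1, hjN⟩, rfl⟩
    dsimp only
    have e : lieDeriv f ((lieDeriv f)^[j] p) = (lieDeriv f)^[j + 1] p :=
      (Function.iterate_succ_apply' _ _ _).symm
    rw [e]
    rcases lt_or_eq_of_le hjN with hlt | rfl
    · exact Ideal.subset_span ⟨j + 1, ⟨le_trans hj1 (Nat.le_succ j), hlt⟩, rfl⟩
    · exact h
  have hmem : ∀ m, N + 1 ≤ m → (lieDeriv f)^[m] p ∈ I := by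
    intro m hm
    induction m with
    | zero => omega
    | succ k ih =>
      rcases Nat.lt_or_ge k (N + 1) with hk | hk
      · have : k = N := by omega
        subst this; exact h
      · rw [Function.iterate_succ_apply']
        exact hinv _ (ih hk)
  have hnorm : ∀ a : EuclideanSpace ℝ (Fin n),
      (0 < ‖a‖ ↔ 0 < ‖a‖ ^ 2) ∧ (‖a‖ < r ↔ ‖a‖ ^ 2 < r ^ 2) := by
    intro a
    constructor
    · constructor
      · exact fun h => pow_pos h 2
      · intro h2
        rcases (norm_nonneg a).lt_or_eq with h | h
        · exact h
        · simp [← h] at h2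
    · constructor
      · exact fun h => pow_lt_pow_left₀ h (norm_nonneg a) two_ne_zero
      · exact fun h => lt_of_pow_lt_pow_left₀ 2 hr.le h
  constructor
  · rintro ⟨h0, hpos, htrans⟩
    refine ⟨h0, fun a ha har => hpos a (((hnorm a).1).2 ha) (((hnorm a).2).2 har), ?_⟩
    intro a ha2 har2
    have ha := ((hnorm a).1).2 ha2
    have har := ((hnorm a).2).2 har2
    obtain ⟨k, hk1, hkz, hkneg⟩ := htrans a ha har
    rcases le_or_gt k N with hkN | hkN
    · exact ⟨k, hk1, hkN, hkz, hkneg⟩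
    · exfalso
      have hker : I ≤ RingHom.ker (eval (fun i => a i)) := by
        rw [hI, Ideal.span_le]
        rintro s ⟨j, ⟨hj1, hjN⟩, rfl⟩
        exact hkz j hj1 (lt_of_le_of_lt hjN hkN)
      have : eval (fun i => a i) ((lieDeriv f)^[k] p) = 0 :=
        hker (hmem k hkN)
      linarith
  · rintro ⟨h0, hpos, htrans⟩
    refine ⟨h0, fun a ha har => hpos a (((hnorm a).1).1 ha) (((hnorm a).2).1 har), ?_⟩
    intro a ha har
    obtain ⟨i, hi1, _, hiz, hineg⟩ := htrans a (((hnorm a).1).1 ha) (((hnorm a).2).1 har)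
    exact ⟨i, hi1, hiz, hineg⟩
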